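/- Let B be a bounded self-adjoint positive semidefinite operator on a Hilbert space, c₀ > 0 with c₀‖B‖ ≤ 1, and P = I - c₀B. Then for all natural numbers t, k ≥ 1, ‖(I - P^t)·P^k‖ ≤ t/(k+t). -/

import Mathlib

/-!
Since `0 ≤ c₀ • B ≤ 1`, also `0 ≤ P ≤ 1`, so the spectrum of `P` lies in `[0, 1]` and the
continuous functional calculus reduces the claim to the scalar bound
`(1 - x ^ t) * x ^ k ≤ t / (k + t)` on `[0, 1]`. That bound is the weighted sum of
`k (1 - x ^ t) x ^ k ≤ k t (1 - x) x ^ k ≤ t (1 - x ^ k)` (Bernoulli, then the geometric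
sum `1 - x ^ k = (1 - x) ∑_{i<k} x ^ i ≥ k (1 - x) x ^ k`) and `t (1 - x ^ t) x ^ k ≤ t x ^ k`.
-/

open Finset

section Scalar

variable {R : Type*} [Field R] [LinearOrder R] [IsStrictOrderedRing R] {x : R}

theorem nat_mul_one_sub_mul_pow_le_one_sub_pow (hx0 : 0 ≤ x) (hx1 : x ≤ 1) (k : ℕ) :
    k * (1 - x) * x ^ k ≤ 1 - x ^ k := by
  have hterm : ∀ i ∈ range k, x ^ k ≤ x ^ i := fun i hi =>
    pow_le_pow_of_le_one hx0 hx1 (mem_range.mp hi).le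
  calc k * (1 - x) * x ^ k = (1 - x) * ∑ _i ∈ range k, x ^ k := by
        rw [sum_const, card_range, nsmul_eq_mul]; ring
    _ ≤ (1 - x) * ∑ i ∈ range k, x ^ i :=
      mul_le_mul_of_nonneg_left (sum_le_sum hterm) (sub_nonneg.mpr hx1)
    _ = 1 - x ^ k := mul_neg_geom_sum x k

theorem one_sub_pow_mul_pow_le_div (hx0 : 0 ≤ x) (hx1 : x ≤ 1) (t k : ℕ) :
    (1 - x ^ t) * x ^ k ≤ t / (k + t) := by
  rcases Nat.eq_zero_or_pos t with rfl | ht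
  · simp
  have hbernoulli : 1 - x ^ t ≤ t * (1 - x) := by
    linarith [one_add_mul_sub_le_pow (by linarith : (-1 : R) ≤ x) t]
  have hxk : 0 ≤ x ^ k := pow_nonneg hx0 k
  have hxt : 0 ≤ x ^ t := pow_nonneg hx0 t
  rw [le_div_iff₀ (by positivity)]
  calc (1 - x ^ t) * x ^ k * (k + t)
        = k * ((1 - x ^ t) * x ^ k) + t * ((1 - x ^ t) * x ^ k) := by ring
    _ ≤ k * (t * (1 - x) * x ^ k) + t * x ^ k := by
        gcongr
        exact mul_le_of_le_one_left hxk (by linarith)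
    _ = t * (k * (1 - x) * x ^ k) + t * x ^ k := by ring
    _ ≤ t * (1 - x ^ k) + t * x ^ k := by
        gcongr; exact nat_mul_one_sub_mul_pow_le_one_sub_pow hx0 hx1 k
    _ = t := by ring

end Scalar

section CStarAlgebra

variable {A : Type*} [CStarAlgebra A] [PartialOrder A] [StarOrderedRing A]

theorem norm_one_sub_pow_mul_pow_le_div {a : A} (h0 : 0 ≤ a) (h1 : a ≤ 1) (t k : ℕ) :
    ‖(1 - a ^ t) * a ^ k‖ ≤ t / (k + t) := by
  have hfun : (1 - a ^ t) * a ^ k = cfc (fun x : ℝ => (1 - x ^ t) * x ^ k) a := by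
    rw [cfc_mul .., cfc_sub .., cfc_pow_id a t, cfc_pow_id a k, cfc_const_one ℝ a]
  rw [hfun]
  refine norm_cfc_le (by positivity) fun x hx => ?_
  have hx0 : 0 ≤ x := spectrum_nonneg_of_nonneg h0 hx
  have hx1 : x ≤ 1 := (CFC.le_one_iff a).mp h1 x hx
  have hfx_nonneg : 0 ≤ (1 - x ^ t) * x ^ k :=
    mul_nonneg (sub_nonneg.mpr (pow_le_one₀ hx0 hx1)) (pow_nonneg hx0 k)
  rw [Real.norm_of_nonneg hfx_nonneg]
  exact one_sub_pow_mul_pow_le_div hx0 hx1 t k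

end CStarAlgebra

theorem stmt3 {E : Type*} [NormedAddCommGroup E] [InnerProductSpace ℂ E] [CompleteSpace E]
    (B : E →L[ℂ] E) (hBpos : 0 ≤ B)
    (c₀ : ℝ) (hc₀ : 0 < c₀) (hc₀B : c₀ * ‖B‖ ≤ 1)
    (P : E →L[ℂ] E) (hP : P = 1 - c₀ • B)
    (t k : ℕ) :
    ‖(1 - P ^ t) * P ^ k‖ ≤ (t : ℝ) / ((k : ℝ) + (t : ℝ)) := by
  have hc₀B_nonneg : 0 ≤ c₀ • B := smul_nonneg hc₀.le hBpos
  have hc₀B_le_one : c₀ • B ≤ 1 := by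
    rwa [← CStarAlgebra.norm_le_one_iff_of_nonneg _, norm_smul, Real.norm_of_nonneg hc₀.le]
  subst hP
  exact norm_one_sub_pow_mul_pow_le_div (sub_nonneg.mpr hc₀B_le_one)
    (sub_le_self 1 hc₀B_nonneg) t k
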